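/- Let L = x(1+16x)²·d²/dx² + (1+16x)²·d/dx − 4. There is a unique formal power series B(x) ∈ ℚ⟦x⟧ with B(0) = 0 and B'(0) = 1 solving the inhomogeneous equation L·B = 1 + 16x, and its coefficients satisfy: for every n ≥ 1, lcm(1,2,...,n)² times the x^n-coefficient of B is an integer. -/

import Mathlib

/-!
In the variable `t = x / (1 + 16x)`, for which `dt/dx = (1 - 16t)²`, the operator reads
`L = t(1 - 16t) d²/dt² + (1 - 32t) d/dt - 4` and sends `tʲ` to
`j² tʲ⁻¹ - 4(2j + 1)² tʲ`. So `B = ∑ cₘ tᵐ` with `c₀ = 0` and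
`(m + 1)² cₘ₊₁ = 4(2m + 1)² cₘ + 16ᵐ`, that is
`cₘ = C(2m, m)² ∑_{k=1}^{m} 16^(k-1) / (k C(2k, k))²`.
As `t` has integer coefficients and `tᵐ = O(xᵐ)`, the bound reduces to
`k C(2k, k) ∣ lcm(1, …, n) C(2m, m)` for `1 ≤ k ≤ m ≤ n`. By Kummer's theorem
`v_p(k C(2k, k)) ≤ ⌊log_p 2k⌋`, which exceeds `v_p(lcm(1, …, n)) = ⌊log_p n⌋ =: L`
only if `m < p^(L+1) ≤ 2m`; then `m + m` carries at `p^(L+1)`, so `p ∣ C(2m, m)`.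
-/

open PowerSeries

/-- The differential operator `L = x(1+16x)² d²/dx² + (1+16x)² d/dx − 4`
acting on formal power series over `ℚ`. -/
noncomputable def Lop (B : PowerSeries ℚ) : PowerSeries ℚ :=
  PowerSeries.X * (1 + 16 * PowerSeries.X) ^ 2 *
      PowerSeries.derivativeFun (PowerSeries.derivativeFun B) +
    (1 + 16 * PowerSeries.X) ^ 2 * PowerSeries.derivativeFun B - 4 * B

open Finset

namespace Nat

theorem factorization_centralBinom_eq_card {p k b : ℕ} (hp : p.Prime) (hb : log p (2 * k) < b) :
    (centralBinom k).factorization p = #{i ∈ Ico 1 b | p ^ i ≤ 2 * (k % p ^ i)} := by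
  rw [centralBinom_eq_two_mul_choose, two_mul, factorization_choose' hp (by rwa [← two_mul])]
  simp only [two_mul]

theorem factorization_mul_centralBinom_le_log {p k : ℕ} (hp : p.Prime) (hk : k ≠ 0) :
    (k * centralBinom k).factorization p ≤ log p (2 * k) := by
  set v := k.factorization p
  have hv : v ≤ log p (2 * k) :=
    le_log_of_pow_le hp.one_lt ((le_of_dvd (by omega) (ordProj_dvd k p)).trans (by omega))
  have hcarries : {i ∈ Ico 1 (log p (2 * k) + 1) | p ^ i ≤ 2 * (k % p ^ i)} ⊆
      Ico (v + 1) (log p (2 * k) + 1) := by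
    intro i hi
    simp only [mem_filter, mem_Ico] at hi ⊢
    refine ⟨?_, hi.1.2⟩
    by_contra! hiv
    rw [Nat.mod_eq_zero_of_dvd ((pow_dvd_pow p (by omega)).trans (ordProj_dvd k p))] at hi
    exact (pow_pos hp.pos i).ne' (by omega)
  have := card_le_card hcarries
  rw [factorization_mul hk (centralBinom_ne_zero k), Finsupp.add_apply,
    factorization_centralBinom_eq_card hp (lt_add_one _)]
  simp only [card_Ico] at this
  omega

theorem one_le_factorization_centralBinom {p m i : ℕ} (hp : p.Prime) (hm : m < p ^ i)
    (hi : p ^ i ≤ 2 * m) : 1 ≤ (centralBinom m).factorization p := by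
  have hlog : log p (2 * m) < i + 1 :=
    log_lt_of_lt_pow (by omega) (by rw [pow_succ]; nlinarith [hp.two_le])
  rw [factorization_centralBinom_eq_card hp hlog, one_le_card]
  have hi0 : i ≠ 0 := by rintro rfl; rw [pow_zero] at hm hi; omega
  exact ⟨i, mem_filter.mpr ⟨mem_Ico.mpr ⟨by omega, lt_add_one i⟩, by rwa [mod_eq_of_lt hm]⟩⟩

theorem factorization_mul_centralBinom_le {p k m n : ℕ} (hp : p.Prime) (hk : k ≠ 0)
    (hkm : k ≤ m) (hmn : m ≤ n) :
    (k * centralBinom k).factorization p ≤ log p n + (centralBinom m).factorization p := by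
  have hlog := factorization_mul_centralBinom_le_log hp hk
  by_cases hsmall : 2 * k < p ^ (log p n + 1)
  · have := log_lt_of_lt_pow (by omega) hsmall
    omega
  · have hn : n < p ^ (log p n + 1) := lt_pow_succ_log_self hp.one_lt n
    have h2n : log p (2 * k) < log p n + 2 :=
      log_lt_of_lt_pow (by omega) (by rw [pow_succ]; nlinarith [hp.two_le])
    have := one_le_factorization_centralBinom (m := m) (i := log p n + 1) hp
      (by omega) (by omega)
    omega

theorem mul_centralBinom_dvd_lcmUpto_mul_centralBinom {k m n : ℕ} (hk : k ≠ 0) (hkm : k ≤ m)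
    (hmn : m ≤ n) : k * centralBinom k ∣ lcmUpto n * centralBinom m := by
  rw [← factorization_prime_le_iff_dvd (mul_ne_zero hk (centralBinom_ne_zero k))
    (mul_ne_zero (lcmUpto_ne_zero n) (centralBinom_ne_zero m))]
  intro p hp
  rw [factorization_mul (lcmUpto_ne_zero n) (centralBinom_ne_zero m), Finsupp.add_apply,
    factorization_lcmUpto n hp]
  exact factorization_mul_centralBinom_le hp hk hkm hmn

end Nat

open Nat (centralBinom lcmUpto)

theorem PowerSeries.X_pow_dvd_derivative {R : Type*} [CommSemiring R] {f : R⟦X⟧} {n : ℕ}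
    (h : X ^ (n + 1) ∣ f) : X ^ n ∣ d⁄dX R f := by
  rw [X_pow_dvd_iff] at h ⊢
  intro m hm
  rw [coeff_derivative, h (m + 1) (by omega), zero_mul]

namespace Lop

theorem eq_derivative (f : ℚ⟦X⟧) :
    Lop f = X * (1 + 16 * X) ^ 2 * d⁄dX ℚ (d⁄dX ℚ f) + (1 + 16 * X) ^ 2 * d⁄dX ℚ f
      - 4 * f :=
  rfl

noncomputable def linearMap : ℚ⟦X⟧ →ₗ[ℚ] ℚ⟦X⟧ where
  toFun := Lop
  map_add' f g := by simp only [eq_derivative, map_add]; ring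
  map_smul' a f := by
    rw [eq_derivative, eq_derivative, Derivation.map_smul, Derivation.map_smul]
    simp only [RingHom.id_apply, smul_eq_C_mul]; ring

theorem linearMap_apply (f : ℚ⟦X⟧) : linearMap f = Lop f := rfl

theorem zero : Lop 0 = 0 := map_zero linearMap

theorem add (f g : ℚ⟦X⟧) : Lop (f + g) = Lop f + Lop g := map_add linearMap f g

theorem sub (f g : ℚ⟦X⟧) : Lop (f - g) = Lop f - Lop g := map_sub linearMap f g

theorem C_mul (a : ℚ) (f : ℚ⟦X⟧) : Lop (C a * f) = C a * Lop f := by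
  simpa only [linearMap_apply, smul_eq_C_mul] using map_smul linearMap a f

theorem coeff_succ (f : ℚ⟦X⟧) (n : ℕ) :
    coeff (n + 1) (Lop f) = ((n : ℚ) + 2) ^ 2 * coeff (n + 2) f
      + (32 * ((n : ℚ) + 1) ^ 2 - 4) * coeff (n + 1) f + 256 * (n : ℚ) ^ 2 * coeff n f := by
  set g := d⁄dX ℚ (X * d⁄dX ℚ f)
  have hL : Lop f = g + X * (C 32 * g + X * (C 256 * g)) - C 4 * f := by
    simp only [eq_derivative, g, Derivation.leibniz, derivative_X, smul_eq_mul, map_ofNat]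
    ring
  have hg (k : ℕ) : coeff k g = ((k : ℚ) + 1) ^ 2 * coeff (k + 1) f := by
    simp only [g, coeff_derivative, coeff_succ_X_mul]
    ring
  rw [hL, map_sub, map_add, coeff_succ_X_mul, map_add, coeff_C_mul, coeff_C_mul]
  rcases n with _ | n
  · rw [coeff_zero_X_mul, hg, hg]; push_cast; ring
  · rw [coeff_succ_X_mul, coeff_C_mul, hg, hg, hg]; push_cast; ring

theorem X_pow_dvd_of_X_pow_succ_dvd {f : ℚ⟦X⟧} {n : ℕ} (h : X ^ (n + 1) ∣ f) :
    X ^ n ∣ Lop f := by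
  have h1 := X_pow_dvd_derivative h
  have h2 : X ^ n ∣ X * d⁄dX ℚ (d⁄dX ℚ f) := by
    rcases n with _ | n
    · exact one_dvd _
    · exact (pow_succ' (X : ℚ⟦X⟧) n) ▸ mul_dvd_mul_left X (X_pow_dvd_derivative h1)
  rw [eq_derivative, mul_right_comm]
  exact dvd_sub (dvd_add (h2.mul_right _) (h1.mul_left _))
    (((pow_dvd_pow X n.le_succ).trans h).mul_left _)

noncomputable def w : ℚ⟦X⟧ := map (Int.castRingHom ℚ) (rescale (-16) (mk 1))

noncomputable def t : ℚ⟦X⟧ := X * w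

theorem one_add_mul_w : (1 + 16 * X) * w = 1 := by
  have h := congrArg (map (Int.castRingHom ℚ) ∘ rescale (-16)) (mk_one_mul_one_sub_eq_one ℤ)
  simp only [Function.comp_apply, map_mul, map_sub, map_one, rescale_X, map_X, map_neg,
    map_ofNat] at h
  rw [w]
  linear_combination h

theorem w_eq : w = 1 - 16 * t := by
  rw [t]; linear_combination one_add_mul_w

theorem derivative_w : d⁄dX ℚ w = -16 * w ^ 2 := by
  have h16 : d⁄dX ℚ (16 : ℚ⟦X⟧) = 0 := by rw [← map_ofNat C 16, derivative_C]
  have h := congrArg (d⁄dX ℚ) one_add_mul_w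
  simp only [Derivation.leibniz, map_add, derivative_X, Derivation.map_one_eq_zero, h16,
    smul_eq_mul] at h
  linear_combination w * h - d⁄dX ℚ w * one_add_mul_w

theorem derivative_t : d⁄dX ℚ t = w ^ 2 := by
  rw [t, Derivation.leibniz, derivative_w, derivative_X, smul_eq_mul, smul_eq_mul]
  linear_combination (-w) * one_add_mul_w

theorem X_mul_derivative_t_pow (m : ℕ) :
    X * d⁄dX ℚ (t ^ m) = (m : ℚ⟦X⟧) * t ^ m * w := by
  rcases m with _ | m
  · simp
  · rw [derivative_pow, derivative_t, t]
    push_cast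
    ring

theorem apply_t_pow_succ (m : ℕ) :
    Lop (t ^ (m + 1))
      = C (((m : ℚ) + 1) ^ 2) * t ^ m - C (4 * (2 * (m : ℚ) + 3) ^ 2) * t ^ (m + 1) := by
  have h1 : d⁄dX ℚ (t ^ (m + 1)) = (m + 1) * t ^ m * w ^ 2 := by
    rw [derivative_pow, derivative_t]; push_cast; ring
  have h2 : d⁄dX ℚ (w ^ 2) = -32 * w ^ 3 := by
    rw [derivative_pow, derivative_w]; push_cast; ring
  have h3 := X_mul_derivative_t_pow m
  rw [eq_derivative, h1, Derivation.leibniz, Derivation.leibniz, h2]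
  simp only [smul_eq_mul, map_natCast, map_add, map_one, map_pow, map_mul, map_ofNat,
    Derivation.map_natCast, Derivation.map_one_eq_zero]
  have ht : t = X * w := rfl
  linear_combination ((m : ℚ⟦X⟧) + 1) * (1 + 16 * X) ^ 2 * w ^ 2 * h3
    + 32 * ((m : ℚ⟦X⟧) + 1) * ((1 + 16 * X) * w) ^ 2 * t ^ m * ht
    + ((m : ℚ⟦X⟧) + 1) * ((1 + 16 * X) * w + 1) * (-32 * t ^ m * t + m * t ^ m * w + t ^ m)
      * one_add_mul_w
    + ((m : ℚ⟦X⟧) + 1) * m * t ^ m * w_eq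

noncomputable def c (m : ℕ) : ℚ :=
  (centralBinom m : ℚ) ^ 2 * ∑ k ∈ Icc 1 m, (16 : ℚ) ^ (k - 1) / ((k : ℚ) * centralBinom k) ^ 2

theorem c_zero : c 0 = 0 := by simp [c]

theorem c_one : c 1 = 1 := by simp [c, Nat.centralBinom_eq_two_mul_choose]

theorem succ_sq_mul_c_succ (m : ℕ) :
    ((m : ℚ) + 1) ^ 2 * c (m + 1) = 4 * (2 * m + 1) ^ 2 * c m + 16 ^ m := by
  have hrec : ((m : ℚ) + 1) * centralBinom (m + 1) = 2 * (2 * m + 1) * centralBinom m := by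
    exact_mod_cast Nat.succ_mul_centralBinom_succ m
  have hm : (m : ℚ) + 1 ≠ 0 := by positivity
  have hC : (centralBinom (m + 1) : ℚ) ≠ 0 := by exact_mod_cast Nat.centralBinom_ne_zero _
  rw [c, c, sum_Icc_succ_top (by omega), Nat.add_sub_cancel]
  push_cast
  set S := ∑ k ∈ Icc 1 m, (16 : ℚ) ^ (k - 1) / ((k : ℚ) * centralBinom k) ^ 2
  calc ((m : ℚ) + 1) ^ 2 * ((centralBinom (m + 1) : ℚ) ^ 2 *
        (S + 16 ^ m / (((m : ℚ) + 1) * centralBinom (m + 1)) ^ 2))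
      = (((m : ℚ) + 1) * centralBinom (m + 1)) ^ 2 * S + 16 ^ m := by
        field_simp
    _ = _ := by rw [hrec]; ring

noncomputable def partialSum (N : ℕ) : ℚ⟦X⟧ := ∑ m ∈ range (N + 1), C (c m) * t ^ m

theorem partialSum_succ (N : ℕ) :
    partialSum (N + 1) = partialSum N + C (c (N + 1)) * t ^ (N + 1) :=
  sum_range_succ _ _

theorem partialSum_zero : partialSum 0 = 0 := by simp [partialSum, c_zero]

theorem apply_partialSum (N : ℕ) :
    Lop (partialSum N)
      = (1 + 16 * X) * (1 - (16 * t) ^ N) - C (4 * (2 * N + 1) ^ 2 * c N) * t ^ N := by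
  induction N with
  | zero => simp [partialSum_zero, zero, c_zero]
  | succ N ih =>
    have hrec := congrArg C (succ_sq_mul_c_succ N)
    simp only [map_add, map_mul, map_pow, map_natCast, map_ofNat, map_one] at hrec
    rw [partialSum_succ, add, C_mul, apply_t_pow_succ, ih]
    simp only [map_add, map_mul, map_pow, map_natCast, map_ofNat, map_one, Nat.cast_add,
      Nat.cast_one]
    have ht : t = X * w := rfl
    linear_combination
      t ^ N * hrec + 16 ^ (N + 1) * t ^ N * (X * one_add_mul_w + (1 + 16 * X) * ht)

theorem X_pow_dvd_t_pow (m : ℕ) : X ^ m ∣ t ^ m := by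
  rw [t, mul_pow]; exact dvd_mul_right _ _

theorem X_pow_dvd_apply_partialSum_sub (N : ℕ) :
    X ^ N ∣ Lop (partialSum N) - (1 + 16 * X) := by
  have h : Lop (partialSum N) - (1 + 16 * X)
      = t ^ N * (-(1 + 16 * X) * 16 ^ N - C (4 * (2 * N + 1) ^ 2 * c N)) := by
    rw [apply_partialSum]; ring
  rw [h]
  exact (X_pow_dvd_t_pow N).mul_right _

theorem X_pow_dvd_partialSum_sub {M N : ℕ} (h : M ≤ N) :
    X ^ (M + 1) ∣ partialSum N - partialSum M := by
  rw [partialSum, partialSum, ← sum_Ico_eq_sub _ (by omega)]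
  refine dvd_sum fun m hm => ((pow_dvd_pow X ?_).trans (X_pow_dvd_t_pow m)).mul_left _
  exact (mem_Ico.mp hm).1

-- The `n`-th coefficient of `∑ cₘ tᵐ` only involves `m ≤ n`.
noncomputable def solution : ℚ⟦X⟧ := mk fun n => coeff n (partialSum n)

theorem X_pow_dvd_solution_sub (N : ℕ) : X ^ (N + 1) ∣ solution - partialSum N := by
  refine X_pow_dvd_iff.mpr fun n hn => ?_
  have h := X_pow_dvd_iff.mp (X_pow_dvd_partialSum_sub (Nat.lt_succ_iff.mp hn)) n (lt_add_one n)
  rw [map_sub] at h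
  rw [map_sub, solution, coeff_mk, ← neg_sub, h, neg_zero]

theorem apply_solution : Lop solution = 1 + 16 * X := by
  have h : ∀ n, X ^ (n + 1) ∣ Lop solution - (1 + 16 * X) := fun n => by
    have h1 := X_pow_dvd_of_X_pow_succ_dvd (X_pow_dvd_solution_sub (n + 1))
    rw [sub] at h1
    simpa only [sub_add_sub_cancel] using dvd_add h1 (X_pow_dvd_apply_partialSum_sub (n + 1))
  ext n
  rw [← sub_eq_zero, ← map_sub]
  exact X_pow_dvd_iff.mp (h n) n (lt_add_one n)

theorem coeff_solution (n : ℕ) :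
    coeff n solution = ∑ m ∈ range (n + 1), c m * coeff n (t ^ m) := by
  simp only [solution, partialSum, coeff_mk, map_sum, coeff_C_mul]

theorem coeff_zero_solution : coeff 0 solution = 0 := by
  simp [coeff_solution, c_zero]

theorem coeff_one_solution : coeff 1 solution = 1 := by
  simp [coeff_solution, sum_range_succ, c_zero, c_one, t, w, coeff_map]

theorem eq_zero_of_Lop_eq_zero {f : ℚ⟦X⟧} (h0 : coeff 0 f = 0) (h1 : coeff 1 f = 0)
    (hL : Lop f = 0) : f = 0 := by
  have h : ∀ n, coeff n f = 0 ∧ coeff (n + 1) f = 0 := by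
    intro n
    induction n with
    | zero => exact ⟨h0, h1⟩
    | succ n ih =>
      refine ⟨ih.2, ?_⟩
      have hn := coeff_succ f n
      rw [hL, map_zero, ih.1, ih.2] at hn
      have : ((n : ℚ) + 2) ^ 2 ≠ 0 := by positivity
      simpa [this] using hn.symm
  ext n
  exact (h n).1

theorem eq_solution {f : ℚ⟦X⟧} (h0 : coeff 0 f = 0) (h1 : coeff 1 f = 1)
    (hL : Lop f = 1 + 16 * X) : f = solution :=
  sub_eq_zero.mp <| eq_zero_of_Lop_eq_zero (by rw [map_sub, h0, coeff_zero_solution, sub_self])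
    (by rw [map_sub, h1, coeff_one_solution, sub_self]) (by rw [sub, hL, apply_solution, sub_self])

theorem coeff_t_pow_mem_range (m n : ℕ) : coeff n (t ^ m) ∈ (Int.castRingHom ℚ).range := by
  have ht : t = map (Int.castRingHom ℚ) (X * rescale (-16) (mk 1)) := by
    rw [map_mul, map_X]; rfl
  rw [ht, ← map_pow, coeff_map]
  exact RingHom.mem_range_self _ _

theorem lcmUpto_sq_mul_c_mem_range {m n : ℕ} (hmn : m ≤ n) :
    (lcmUpto n : ℚ) ^ 2 * c m ∈ (Int.castRingHom ℚ).range := by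
  rw [c, ← mul_assoc, ← mul_pow, mul_sum]
  refine Subring.sum_mem _ fun k hk => ?_
  obtain ⟨hk1, hkm⟩ := mem_Icc.mp hk
  obtain ⟨q, hq⟩ := Nat.mul_centralBinom_dvd_lcmUpto_mul_centralBinom (by omega) hkm hmn
  have hk0 : (k : ℚ) ≠ 0 := by exact_mod_cast (show k ≠ 0 by omega)
  have hC : (centralBinom k : ℚ) ≠ 0 := by exact_mod_cast Nat.centralBinom_ne_zero k
  refine ⟨16 ^ (k - 1) * q ^ 2, ?_⟩
  rw [← Nat.cast_mul, hq, eq_intCast]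
  push_cast
  field_simp

theorem lcmUpto_sq_mul_coeff_solution_mem_range (n : ℕ) :
    (lcmUpto n : ℚ) ^ 2 * coeff n solution ∈ (Int.castRingHom ℚ).range := by
  rw [coeff_solution, mul_sum]
  refine Subring.sum_mem _ fun m hm => ?_
  rw [← mul_assoc]
  exact mul_mem (lcmUpto_sq_mul_c_mem_range (Nat.lt_succ_iff.mp (mem_range.mp hm)))
    (coeff_t_pow_mem_range m n)

end Lop

/-- **Existence, uniqueness and denominator bound for the solution of
`L·B = 1 + 16x`:** there is a unique `B ∈ ℚ⟦x⟧` with `B(0) = 0`, `B'(0) = 1`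
and `L·B = 1 + 16x`, and its coefficients satisfy
`lcm(1,…,n)² · bₙ ∈ ℤ` for every `n ≥ 1`. -/
theorem stmt_14 :
    (∃! B : PowerSeries ℚ,
      PowerSeries.coeff 0 B = 0 ∧ PowerSeries.coeff 1 B = 1 ∧
        Lop B = 1 + 16 * PowerSeries.X) ∧
    ∀ B : PowerSeries ℚ,
      (PowerSeries.coeff 0 B = 0 ∧ PowerSeries.coeff 1 B = 1 ∧
        Lop B = 1 + 16 * PowerSeries.X) →
      ∀ n : ℕ, 1 ≤ n → ∃ z : ℤ,
        (((Finset.Icc 1 n).lcm id : ℕ) : ℚ) ^ 2 * PowerSeries.coeff n B = z := by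
  refine ⟨⟨Lop.solution,
    ⟨Lop.coeff_zero_solution, Lop.coeff_one_solution, Lop.apply_solution⟩,
    fun B ⟨h0, h1, hL⟩ => Lop.eq_solution h0 h1 hL⟩, ?_⟩
  rintro B ⟨h0, h1, hL⟩ n -
  obtain ⟨z, hz⟩ := Lop.lcmUpto_sq_mul_coeff_solution_mem_range n
  exact ⟨z, by rw [Lop.eq_solution h0 h1 hL]; exact hz.symm⟩
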